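/- Let S be a semiring, μ : Σ_r^* → S^{n×n} a monoid morphism, α ∈ S^{1×n}, β ∈ S^{n×1}, and let β̃ : {b,c}^* → S^{rn×rn} be the second embedding (β̃(b) the block cyclic shift, β̃(c) = diag(μ(a_1),...,μ(a_r))). Set α' = (α, 0,...,0) ∈ S^{1×rn} and β' = (β; β; ...; β) ∈ S^{rn×1} (β repeated r times). Then for any word v = c^{i_1}b···c^{i_k}bc^{i_{k+1}}, α' β̃(v) β' = α μ(a_1^{i_1} a_2^{i_2} ··· a_{k+1}^{i_{k+1}}) β (cyclic indexing of letters). Consequently, {α' β̃(v) β' : v ∈ {b,c}^*} = {α μ(w) β : w ∈ Σ_r^*}. -/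

import Mathlib

open Matrix

/-- The block cyclic shift matrix `[0, I_{(r-1)n}; I_n, 0]`. -/
def cycShift (S : Type*) [Semiring S] (r n : ℕ) :
    Matrix (Fin r × Fin n) (Fin r × Fin n) S :=
  Matrix.of fun p q => if (q.1 : ℕ) = ((p.1 : ℕ) + 1) % r ∧ p.2 = q.2 then 1 else 0

/-- The block diagonal matrix `diag(U_1, …, U_r)`. -/
def diagBlk {S : Type*} [Semiring S] {r n : ℕ}
    (U : Fin r → Matrix (Fin n) (Fin n) S) :
    Matrix (Fin r × Fin n) (Fin r × Fin n) S :=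
  Matrix.of fun p q => if p.1 = q.1 then U p.1 p.2 q.2 else 0

/-- The second embedding `β̃ : {b,c}^* → S^{rn×rn}`, `b = 0 ↦` block cyclic
shift, `c = 1 ↦ diag(μ(a_1), …, μ(a_r))`. -/
def secondEmb {S : Type*} [Semiring S] {r n : ℕ}
    (μ : FreeMonoid (Fin r) →* Matrix (Fin n) (Fin n) S) :
    FreeMonoid (Fin 2) →* Matrix (Fin r × Fin n) (Fin r × Fin n) S :=
  FreeMonoid.lift fun x =>
    if x = 0 then cycShift S r n else diagBlk fun i => μ (FreeMonoid.of i)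

/-- The word `c^{i_1} b ⋯ c^{i_k} b c^{i_{k+1}}` encoded by `L = [i_1, …, i_k]`
and `e = i_{k+1}`. -/
def expWord (L : List ℕ) (e : ℕ) : FreeMonoid (Fin 2) :=
  (L.map fun i => (FreeMonoid.of (1 : Fin 2)) ^ i * FreeMonoid.of (0 : Fin 2)).prod
    * (FreeMonoid.of (1 : Fin 2)) ^ e

open Fin.NatCast in
/-- The word `a_m^{i_1} a_{m+1}^{i_2} ⋯ a_{m+k}^{i_{k+1}}` over `Σ_r`, cyclic
indexing (`0`-indexed). -/
def cycWord {r : ℕ} [NeZero r] (L : List ℕ) (e : ℕ) (m : Fin r) :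
    FreeMonoid (Fin r) :=
  ((((L ++ [e]).zipIdx.map Prod.swap)).map fun te =>
    (FreeMonoid.of (m + (te.1 : Fin r))) ^ te.2).prod

/-- `α' = (α, 0, …, 0) ∈ S^{1×rn}`. -/
def rowExt {S : Type*} [Semiring S] {r n : ℕ} [NeZero r]
    (α : Matrix (Fin 1) (Fin n) S) : Matrix (Fin 1) (Fin r × Fin n) S :=
  Matrix.of fun _ q => if q.1 = 0 then α 0 q.2 else 0

/-- `β' = (β; β; …; β) ∈ S^{rn×1}` (`β` repeated `r` times). -/
def colExt {S : Type*} [Semiring S] {r n : ℕ}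
    (β : Matrix (Fin n) (Fin 1) S) : Matrix (Fin r × Fin n) (Fin 1) S :=
  Matrix.of fun p _ => β p.2 0

/-!
Reading a word over `{b, c}` from the left, the row vector `α'` stays supported on a single
block `m`: the letter `c` multiplies that block by `μ(a_m)` and the letter `b` moves it to block
`m + 1 (mod r)`. Hence `α' β̃(v) β' = α μ(w) β`, where `w` is the word over `Σ_r` decoded from
`v`. Conversely every `w` is such a decoding: before each letter `a_x`, emitted from block `m`,
insert `x - m (mod r)` letters `b`.
-/

theorem FreeMonoid.toList_of_pow {α : Type*} (x : α) (k : ℕ) :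
    (FreeMonoid.of x ^ k).toList = List.replicate k x := by
  induction k with
  | zero => rfl
  | succ k ih => rw [pow_succ', FreeMonoid.toList_of_mul, ih, List.replicate_succ]

namespace SecondEmb

open Fin.NatCast Fin.CommRing

variable {S : Type*} [Semiring S] {r n : ℕ}

def rowAt (m : Fin r) (ρ : Matrix (Fin 1) (Fin n) S) : Matrix (Fin 1) (Fin r × Fin n) S :=
  Matrix.of fun _ q => if q.1 = m then ρ 0 q.2 else 0

theorem rowAt_mul_diagBlk (m : Fin r) (ρ : Matrix (Fin 1) (Fin n) S)
    (U : Fin r → Matrix (Fin n) (Fin n) S) :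
    rowAt m ρ * diagBlk U = rowAt m (ρ * U m) := by
  ext i q
  simp only [Matrix.mul_apply, rowAt, diagBlk, Matrix.of_apply, Fintype.sum_prod_type,
    ite_mul, zero_mul, mul_ite, mul_zero]
  by_cases h : q.1 = m <;> simp [h]

theorem rowAt_mul_colExt (m : Fin r) (ρ : Matrix (Fin 1) (Fin n) S)
    (β : Matrix (Fin n) (Fin 1) S) :
    rowAt m ρ * colExt (r := r) β = ρ * β := by
  ext i j
  simp [Matrix.mul_apply, rowAt, colExt, Fintype.sum_prod_type, Subsingleton.elim i 0,
    Subsingleton.elim j 0]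

theorem secondEmb_of_zero (μ : FreeMonoid (Fin r) →* Matrix (Fin n) (Fin n) S) :
    secondEmb μ (FreeMonoid.of 0) = cycShift S r n := by
  simp [secondEmb]

theorem secondEmb_of_one (μ : FreeMonoid (Fin r) →* Matrix (Fin n) (Fin n) S) :
    secondEmb μ (FreeMonoid.of 1) = diagBlk fun i => μ (FreeMonoid.of i) := by
  simp [secondEmb]

variable [NeZero r]

theorem rowAt_zero (α : Matrix (Fin 1) (Fin n) S) : rowAt 0 α = rowExt (r := r) α :=
  rfl

theorem cycShift_apply (p q : Fin r × Fin n) :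
    cycShift S r n p q = if q = (p.1 + 1, p.2) then 1 else 0 := by
  have hsucc : ((p.1 + 1 : Fin r) : ℕ) = ((p.1 : ℕ) + 1) % r := by
    simp [Fin.val_add, Nat.add_mod]
  simp only [cycShift, Matrix.of_apply, Prod.ext_iff, ← hsucc, Fin.val_inj, eq_comm (a := p.2)]

theorem rowAt_mul_cycShift (m : Fin r) (ρ : Matrix (Fin 1) (Fin n) S) :
    rowAt m ρ * cycShift S r n = rowAt (m + 1) ρ := by
  ext i ⟨k, j⟩
  rw [Matrix.mul_apply, Fintype.sum_eq_single (k - 1, j)]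
  · by_cases hk : k = m + 1
    · simp [rowAt, cycShift_apply, hk]
    · have : k - 1 ≠ m := fun h => hk (by rw [← h]; ring)
      simp [rowAt, hk, this]
  · rintro ⟨k', j'⟩ hp
    rw [cycShift_apply, if_neg]
    · simp
    · rintro ⟨rfl, rfl⟩
      exact hp (by simp)

def decode : List (Fin 2) → Fin r → FreeMonoid (Fin r)
  | [], _ => 1
  | 0 :: l, m => decode l (m + 1)
  | 1 :: l, m => FreeMonoid.of m * decode l m

theorem decode_replicate_zero_append (j : ℕ) (l : List (Fin 2)) (m : Fin r) :
    decode (List.replicate j 0 ++ l) m = decode l (m + (j : Fin r)) := by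
  induction j generalizing m with
  | zero => simp
  | succ j ih =>
    rw [List.replicate_succ, List.cons_append, decode, ih]
    push_cast
    ring_nf

theorem decode_replicate_one_append (i : ℕ) (l : List (Fin 2)) (m : Fin r) :
    decode (List.replicate i 1 ++ l) m = FreeMonoid.of m ^ i * decode l m := by
  induction i with
  | zero => simp
  | succ i ih => rw [List.replicate_succ, List.cons_append, decode, ih, pow_succ', mul_assoc]

theorem rowAt_mul_secondEmb_ofList (μ : FreeMonoid (Fin r) →* Matrix (Fin n) (Fin n) S)
    (l : List (Fin 2)) (m : Fin r) (ρ : Matrix (Fin 1) (Fin n) S) :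
    ∃ m', rowAt m ρ * secondEmb μ (FreeMonoid.ofList l) = rowAt m' (ρ * μ (decode l m)) := by
  induction l generalizing m ρ with
  | nil => exact ⟨m, by simp [decode]⟩
  | cons x l ih =>
    rw [FreeMonoid.ofList_cons, map_mul, ← Matrix.mul_assoc]
    match x with
    | 0 =>
      rw [secondEmb_of_zero, rowAt_mul_cycShift]
      simpa [decode] using ih (m + 1) ρ
    | 1 =>
      rw [secondEmb_of_one, rowAt_mul_diagBlk]
      simpa [decode, Matrix.mul_assoc] using ih m (ρ * μ (FreeMonoid.of m))

theorem rowExt_mul_secondEmb_mul_colExt (μ : FreeMonoid (Fin r) →* Matrix (Fin n) (Fin n) S)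
    (α : Matrix (Fin 1) (Fin n) S) (β : Matrix (Fin n) (Fin 1) S) (v : FreeMonoid (Fin 2)) :
    rowExt (r := r) α * secondEmb μ v * colExt (r := r) β
      = α * μ (decode v.toList 0) * β := by
  obtain ⟨m', hm'⟩ := rowAt_mul_secondEmb_ofList μ v.toList 0 α
  rw [← rowAt_zero, ← FreeMonoid.ofList_toList v, hm', rowAt_mul_colExt,
    FreeMonoid.ofList_toList]

def cycPowProd : List ℕ → Fin r → FreeMonoid (Fin r)
  | [], _ => 1
  | i :: t, m => FreeMonoid.of m ^ i * cycPowProd t (m + 1)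

theorem prod_map_zipIdx_eq_cycPowProd (l : List ℕ) (s : ℕ) (m : Fin r) :
    ((l.zipIdx s).map Prod.swap |>.map fun te => FreeMonoid.of (m + (te.1 : Fin r)) ^ te.2).prod
      = cycPowProd l (m + (s : Fin r)) := by
  induction l generalizing s with
  | nil => rfl
  | cons i t ih =>
    rw [List.zipIdx_cons, List.map_cons, List.map_cons, List.prod_cons, ih, cycPowProd]
    push_cast
    rw [add_assoc]
    rfl

theorem cycWord_eq_cycPowProd (L : List ℕ) (e : ℕ) (m : Fin r) :
    cycWord L e m = cycPowProd (L ++ [e]) m := by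
  simpa [cycWord] using prod_map_zipIdx_eq_cycPowProd (L ++ [e]) 0 m

theorem decode_expWord (L : List ℕ) (e : ℕ) (m : Fin r) :
    decode (expWord L e).toList m = cycPowProd (L ++ [e]) m := by
  induction L generalizing m with
  | nil =>
    simpa [expWord, cycPowProd, FreeMonoid.toList_of_pow, decode] using
      decode_replicate_one_append e [] m
  | cons i t ih =>
    have hword : (expWord (i :: t) e).toList
        = List.replicate i 1 ++ 0 :: (expWord t e).toList := by
      simp [expWord, FreeMonoid.toList_of_pow, mul_assoc]
    rw [hword, decode_replicate_one_append, decode, ih, List.cons_append, cycPowProd]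

def encode : List (Fin r) → Fin r → List (Fin 2)
  | [], _ => []
  | x :: t, m => List.replicate (x - m).val 0 ++ 1 :: encode t x

theorem decode_encode (w : List (Fin r)) (m : Fin r) :
    decode (encode w m) m = FreeMonoid.ofList w := by
  induction w generalizing m with
  | nil => rfl
  | cons x t ih =>
    rw [encode, decode_replicate_zero_append, Fin.cast_val_eq_self, add_sub_cancel, decode, ih]
    rfl

end SecondEmb

/-- For any word `v = c^{i_1}b⋯c^{i_k}bc^{i_{k+1}}`,
`α' β̃(v) β' = α μ(a_1^{i_1} a_2^{i_2} ⋯ a_{k+1}^{i_{k+1}}) β` (cyclic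
indexing); consequently `{α' β̃(v) β' : v ∈ {b,c}^*} = {α μ(w) β : w ∈ Σ_r^*}`. -/
theorem scalar_r_to_two {S : Type*} [Semiring S] {r n : ℕ} [NeZero r]
    (μ : FreeMonoid (Fin r) →* Matrix (Fin n) (Fin n) S)
    (α : Matrix (Fin 1) (Fin n) S) (β : Matrix (Fin n) (Fin 1) S) :
    (∀ (L : List ℕ) (e : ℕ),
      rowExt (r := r) α * secondEmb μ (expWord L e) * colExt (r := r) β
        = α * μ (cycWord L e 0) * β) ∧
    Set.range (fun v : FreeMonoid (Fin 2) => rowExt (r := r) α * secondEmb μ v * colExt (r := r) β)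
      = Set.range (fun w : FreeMonoid (Fin r) => α * μ w * β) := by
  open SecondEmb in
  refine ⟨fun L e => ?_, Set.Subset.antisymm ?_ ?_⟩
  · rw [rowExt_mul_secondEmb_mul_colExt, decode_expWord, cycWord_eq_cycPowProd]
  · rintro _ ⟨v, rfl⟩
    exact ⟨decode v.toList 0, (rowExt_mul_secondEmb_mul_colExt μ α β v).symm⟩
  · rintro _ ⟨w, rfl⟩
    refine ⟨FreeMonoid.ofList (encode w.toList 0), ?_⟩
    simp only [rowExt_mul_secondEmb_mul_colExt, FreeMonoid.toList_ofList, decode_encode,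
      FreeMonoid.ofList_toList]
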